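/- For all 0<q<1, the sequence of offsets is strictly decreasing from n=2 onward: b_n(q) > b_{n+1}(q) for every integer n≥2. -/

import Mathlib

/-!
Shifting the index in `b_{n+1}` gives
`b_n - b_{n+1} = Σ_{m<n} (λ_m - λ_{m+1}) λ_{n-1-m} + κ² - λ_n`.
For `x_i ∈ [0, 1]` the inequalities `∏ (1 - x_i) · (1 + Σ x_i) ≤ 1` and
`∏ (1 - x_i) ≥ 1 - Σ x_i` give `λ_{n-1-m} ≥ λ_n (1 + q^(n-m) + ⋯ + q^n)` and
`κ = λ_n μ_{n+1} ≥ λ_n (1 - c)` with `c = q^(n+1)/(1-q)`. Substituting, the difference is at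
least `c λ_n (Σ_{m=1}^n λ_m - 2 λ_n)`, which is positive because `λ` is strictly decreasing
and `n ≥ 2`.
-/

/-- Partial product of the Euler function: `λ_k(q) = ∏_{i=1}^k (1 - q^i)`, with `λ_0(q) = 1`. -/
noncomputable def eulerLam (q : ℝ) (k : ℕ) : ℝ := ∏ i ∈ Finset.range k, (1 - q ^ (i + 1))

/-- The Euler function `κ(q) = ∏_{i=1}^∞ (1 - q^i)`. -/
noncomputable def eulerKappa (q : ℝ) : ℝ := ∏' i : ℕ, (1 - q ^ (i + 1))

/-- The tail product `μ_n(q) = ∏_{i=n}^∞ (1 - q^i)`. -/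
noncomputable def eulerMu (q : ℝ) (n : ℕ) : ℝ := ∏' i : ℕ, (1 - q ^ (n + i))

/-- The offset `b_n(q) = Σ_{k=1}^n λ_{k-1}(q) λ_{n-k}(q) - n κ(q)²`, the expected number of
posts in a random graph order on `n` elements minus `n κ(q)²`. -/
noncomputable def postOffset (q : ℝ) (n : ℕ) : ℝ :=
  (∑ k ∈ Finset.Icc 1 n, eulerLam q (k - 1) * eulerLam q (n - k)) - n * eulerKappa q ^ 2

namespace Finset

variable {ι R : Type*}

theorem sum_Ico_pow_succ_mul_one_sub [Ring R] (x : R) {j n : ℕ} (h : j ≤ n) :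
    (∑ i ∈ Ico j n, x ^ (i + 1)) * (1 - x) = x ^ (j + 1) - x ^ (n + 1) := by
  rw [sum_Ico_add', geom_sum_Ico_mul_neg _ (by omega)]

variable [CommRing R] [LinearOrder R] [IsStrictOrderedRing R]

theorem prod_one_sub_mul_one_add_sum_le_one (s : Finset ι) {x : ι → R}
    (h0 : ∀ i ∈ s, 0 ≤ x i) (h1 : ∀ i ∈ s, x i ≤ 1) :
    (∏ i ∈ s, (1 - x i)) * (1 + ∑ i ∈ s, x i) ≤ 1 := by
  induction s using Finset.cons_induction with
  | empty => simp
  | cons a s ha ih =>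
    simp only [forall_mem_cons] at h0 h1
    rw [prod_cons, sum_cons]
    have hP : 0 ≤ ∏ i ∈ s, (1 - x i) := prod_nonneg fun i hi ↦ sub_nonneg.2 (h1.2 i hi)
    have hS : 0 ≤ ∑ i ∈ s, x i := sum_nonneg h0.2
    have := ih h0.2 h1.2
    nlinarith [mul_nonneg hP (mul_nonneg h0.1 (add_nonneg h0.1 hS))]

theorem one_sub_sum_le_prod_one_sub (s : Finset ι) {x : ι → R}
    (h0 : ∀ i ∈ s, 0 ≤ x i) (h1 : ∀ i ∈ s, x i ≤ 1) :
    1 - ∑ i ∈ s, x i ≤ ∏ i ∈ s, (1 - x i) := by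
  induction s using Finset.cons_induction with
  | empty => simp
  | cons a s ha ih =>
    simp only [forall_mem_cons] at h0 h1
    rw [prod_cons, sum_cons]
    have hS : 0 ≤ ∑ i ∈ s, x i := sum_nonneg h0.2
    have := ih h0.2 h1.2
    nlinarith [mul_le_mul_of_nonneg_left this (sub_nonneg.2 h1.1), mul_nonneg h0.1 hS]

end Finset

open Finset

section Euler

variable {q : ℝ}

theorem eulerLam_zero (q : ℝ) : eulerLam q 0 = 1 := prod_range_zero _

theorem eulerLam_succ (q : ℝ) (k : ℕ) :
    eulerLam q (k + 1) = eulerLam q k * (1 - q ^ (k + 1)) :=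
  prod_range_succ _ _

theorem eulerLam_pos (hq0 : 0 ≤ q) (hq1 : q < 1) (k : ℕ) : 0 < eulerLam q k :=
  prod_pos fun i _ ↦ sub_pos.2 (pow_lt_one₀ hq0 hq1 i.succ_ne_zero)

theorem eulerLam_strictAnti (hq0 : 0 < q) (hq1 : q < 1) : StrictAnti (eulerLam q) :=
  strictAnti_nat_of_succ_lt fun k ↦ by
    rw [eulerLam_succ]
    nlinarith [eulerLam_pos hq0.le hq1 k, pow_pos hq0 (k + 1)]

theorem eulerLam_mul_one_add_sum_le (hq0 : 0 ≤ q) (hq1 : q < 1) {j n : ℕ} (h : j ≤ n) :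
    eulerLam q n * (1 + ∑ i ∈ Ico j n, q ^ (i + 1)) ≤ eulerLam q j := by
  have hsplit : eulerLam q n = eulerLam q j * ∏ i ∈ Ico j n, (1 - q ^ (i + 1)) :=
    (prod_range_mul_prod_Ico _ h).symm
  rw [hsplit, mul_assoc]
  refine mul_le_of_le_one_right (eulerLam_pos hq0 hq1 j).le ?_
  exact prod_one_sub_mul_one_add_sum_le_one _ (fun i _ ↦ pow_nonneg hq0 _)
    fun i _ ↦ pow_le_one₀ hq0 hq1.le

theorem multipliable_one_sub_pow_add (hq : |q| < 1) (n : ℕ) :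
    Multipliable fun i : ℕ ↦ 1 - q ^ (n + i) := by
  simp_rw [sub_eq_add_neg, pow_add]
  exact Real.multipliable_one_add_of_summable
    ((summable_geometric_of_abs_lt_one hq).mul_left (q ^ n)).neg

theorem eulerKappa_eq_eulerLam_mul_eulerMu (hq : |q| < 1) (n : ℕ) :
    eulerKappa q = eulerLam q n * eulerMu q (n + 1) := by
  have hshift : (fun i : ℕ ↦ 1 - q ^ (n + 1 + i)) = fun i ↦ 1 - q ^ (i + n + 1) := by
    funext i; ring_nf
  have hmul := multipliable_one_sub_pow_add hq (n + 1)
  rw [hshift] at hmul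
  rw [eulerKappa, ← Multipliable.prod_mul_tprod_nat_mul' (f := fun i ↦ 1 - q ^ (i + 1)) hmul,
    eulerLam, eulerMu, hshift]

theorem one_sub_geom_le_eulerMu (hq0 : 0 ≤ q) (hq1 : q < 1) (n : ℕ) :
    1 - q ^ n / (1 - q) ≤ eulerMu q n := by
  have hgeom : HasSum (fun i : ℕ ↦ q ^ (n + i)) (q ^ n / (1 - q)) := by
    simpa only [pow_add, div_eq_mul_inv] using
      (hasSum_geometric_of_lt_one hq0 hq1).mul_left (q ^ n)
  refine ge_of_tendsto'
    (multipliable_one_sub_pow_add (abs_lt.2 ⟨by linarith, hq1⟩) n).hasProd fun s ↦ ?_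
  calc 1 - q ^ n / (1 - q) ≤ 1 - ∑ i ∈ s, q ^ (n + i) := by
        gcongr
        exact sum_le_hasSum s (fun i _ ↦ pow_nonneg hq0 _) hgeom
    _ ≤ ∏ i ∈ s, (1 - q ^ (n + i)) :=
        one_sub_sum_le_prod_one_sub s (fun i _ ↦ pow_nonneg hq0 _)
          fun i _ ↦ pow_le_one₀ hq0 hq1.le

theorem eulerLam_sq_mul_le_eulerKappa_sq (hq0 : 0 ≤ q) (hq1 : q < 1) (n : ℕ) :
    eulerLam q n ^ 2 * (1 - 2 * (q ^ (n + 1) / (1 - q))) ≤ eulerKappa q ^ 2 := by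
  have hμ := one_sub_geom_le_eulerMu hq0 hq1 (n + 1)
  rw [eulerKappa_eq_eulerLam_mul_eulerMu (abs_lt.2 ⟨by linarith, hq1⟩) n, mul_pow]
  gcongr
  -- `μ² ≥ 2μ - 1`
  nlinarith [sq_nonneg (eulerMu q (n + 1) - 1)]

theorem postOffset_eq_sum_range (q : ℝ) (n : ℕ) :
    postOffset q n =
      ∑ m ∈ range n, eulerLam q m * eulerLam q (n - 1 - m) - n * eulerKappa q ^ 2 := by
  rw [postOffset, ← Ico_add_one_right_eq_Icc, sum_Ico_eq_sum_range, Nat.add_sub_cancel]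
  congr 1
  refine sum_congr rfl fun m _ ↦ ?_
  rw [Nat.add_sub_cancel_left, Nat.sub_sub, add_comm 1 m]

theorem postOffset_sub_postOffset_succ (q : ℝ) (n : ℕ) :
    postOffset q n - postOffset q (n + 1) =
      ∑ m ∈ range n, (eulerLam q m - eulerLam q (m + 1)) * eulerLam q (n - 1 - m)
        + eulerKappa q ^ 2 - eulerLam q n := by
  have hsucc : ∑ m ∈ range (n + 1), eulerLam q m * eulerLam q (n + 1 - 1 - m) =
      ∑ m ∈ range n, eulerLam q (m + 1) * eulerLam q (n - 1 - m) + eulerLam q n := by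
    rw [sum_range_succ', eulerLam_zero, one_mul, Nat.add_sub_cancel, Nat.sub_zero]
    congr 1
    refine sum_congr rfl fun m _ ↦ ?_
    rw [Nat.sub_sub, add_comm 1 m]
  rw [postOffset_eq_sum_range, postOffset_eq_sum_range, hsucc]
  simp only [sub_mul, sum_sub_distrib]
  push_cast
  ring

theorem eulerLam_mul_le_sub_mul_eulerLam (hq0 : 0 ≤ q) (hq1 : q < 1) {m n : ℕ} (h : m < n) :
    eulerLam q n *
        (eulerLam q m - eulerLam q (m + 1) + q ^ (n + 1) / (1 - q) * eulerLam q (m + 1))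
      ≤ (eulerLam q m - eulerLam q (m + 1)) * eulerLam q (n - 1 - m) := by
  have hj : n - 1 - m ≤ n := by omega
  have hS : ∑ i ∈ Ico (n - 1 - m) n, q ^ (i + 1) = (q ^ (n - m) - q ^ (n + 1)) / (1 - q) := by
    rw [eq_div_iff (sub_pos.2 hq1).ne', sum_Ico_pow_succ_mul_one_sub q hj,
      show n - 1 - m + 1 = n - m by omega]
  have hpow : q ^ (n - m) * q ^ (m + 1) = q ^ (n + 1) := by
    rw [← pow_add]; congr 1; omega
  have hfac : 0 ≤ eulerLam q m * q ^ (m + 1) :=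
    mul_nonneg (eulerLam_pos hq0 hq1 m).le (pow_nonneg hq0 _)
  calc _ = eulerLam q n * (1 + ∑ i ∈ Ico (n - 1 - m) n, q ^ (i + 1)) *
        (eulerLam q m * q ^ (m + 1)) := by
        rw [hS, eulerLam_succ, ← hpow]
        field_simp [(sub_pos.2 hq1).ne']
        ring
    _ ≤ eulerLam q (n - 1 - m) * (eulerLam q m * q ^ (m + 1)) :=
        mul_le_mul_of_nonneg_right (eulerLam_mul_one_add_sum_le hq0 hq1 hj) hfac
    _ = _ := by rw [eulerLam_succ]; ring

theorem eulerLam_mul_le_sum_sub_mul_eulerLam (hq0 : 0 ≤ q) (hq1 : q < 1) (n : ℕ) :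
    eulerLam q n *
        (1 - eulerLam q n + q ^ (n + 1) / (1 - q) * ∑ m ∈ range n, eulerLam q (m + 1))
      ≤ ∑ m ∈ range n, (eulerLam q m - eulerLam q (m + 1)) * eulerLam q (n - 1 - m) := by
  have htelescope : ∑ m ∈ range n, (eulerLam q m - eulerLam q (m + 1)) = 1 - eulerLam q n := by
    rw [sum_range_sub', eulerLam_zero]
  rw [← htelescope, mul_sum, ← sum_add_distrib, mul_sum]
  exact sum_le_sum fun m hm ↦ eulerLam_mul_le_sub_mul_eulerLam hq0 hq1 (mem_range.1 hm)

theorem two_mul_eulerLam_lt_sum (hq0 : 0 < q) (hq1 : q < 1) {n : ℕ} (hn : 2 ≤ n) :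
    2 * eulerLam q n < ∑ m ∈ range n, eulerLam q (m + 1) := by
  have hanti := eulerLam_strictAnti hq0 hq1
  calc 2 * eulerLam q n < eulerLam q 1 + eulerLam q 2 := by
        linarith [hanti (by omega : 1 < n), hanti.antitone hn]
    _ = ∑ m ∈ range 2, eulerLam q (m + 1) := by simp [sum_range_succ]
    _ ≤ ∑ m ∈ range n, eulerLam q (m + 1) :=
        sum_le_sum_of_subset_of_nonneg (range_subset_range.2 hn)
          fun m _ _ ↦ (eulerLam_pos hq0.le hq1 _).le

end Euler

/-- For all `0 < q < 1`, the offsets are strictly decreasing from `n = 2` on: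
`b_n(q) > b_{n+1}(q)` for every integer `n ≥ 2`. -/
theorem postOffset_strict_anti (q : ℝ) (hq0 : 0 < q) (hq1 : q < 1) (n : ℕ) (hn : 2 ≤ n) :
    postOffset q (n + 1) < postOffset q n := by
  have hsum := eulerLam_mul_le_sum_sub_mul_eulerLam hq0.le hq1 n
  have hκ := eulerLam_sq_mul_le_eulerKappa_sq hq0.le hq1 n
  have h2 := two_mul_eulerLam_lt_sum hq0 hq1 hn
  have hc : 0 < q ^ (n + 1) / (1 - q) := div_pos (pow_pos hq0 _) (sub_pos.2 hq1)
  rw [← sub_pos, postOffset_sub_postOffset_succ]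
  linarith [mul_pos (mul_pos hc (eulerLam_pos hq0.le hq1 n)) (sub_pos.2 h2)]
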